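/- For n, k ≥ 2, the number a_{n,k} of bargraphs of semiperimeter n whose first descent has length k satisfies a_{n,k} = a_{n-1,k} + a_{n-1,k-1}. -/

import Mathlib

/-- Steps of bargraphs / Motzkin paths. -/
inductive Step where
  | U : Step
  | H : Step
  | D : Step
deriving DecidableEq

/-- Vertical displacement of a step. -/
def Step.val : Step → ℤ
  | .U => 1
  | .H => 0
  | .D => -1

/-- Mirror of a step (swap U and D). -/
def Step.mirror : Step → Step
  | .U => .D
  | .H => .H
  | .D => .U

/-- Final height of a word. -/
def hgt (w : List Step) : ℤ := (w.map Step.val).sum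

/-- A Motzkin path prefix: never goes below the x-axis. -/
def IsMotzkinPrefix (w : List Step) : Prop := ∀ p : List Step, p <+: w → 0 ≤ hgt p

/-- A Motzkin path: never below the x-axis, ends at height 0. -/
def IsMotzkin (w : List Step) : Prop := IsMotzkinPrefix w ∧ hgt w = 0

/-- No peak `UD` and no valley `DU`. -/
def Cornerless (w : List Step) : Prop :=
  ¬ [Step.U, Step.D] <:+: w ∧ ¬ [Step.D, Step.U] <:+: w

/-- A bargraph: starts at the origin, ends on the x-axis, stays strictly above the
x-axis except at the endpoints, and has no factor `UD` or `DU`. -/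
def IsBargraph (w : List Step) : Prop :=
  2 ≤ w.length ∧ hgt w = 0 ∧
    (∀ p : List Step, p <+: w → p ≠ [] → p ≠ w → 0 < hgt p) ∧ Cornerless w

/-- Semiperimeter: number of `U` steps plus number of `H` steps. -/
def semi (w : List Step) : ℕ := w.count Step.U + w.count Step.H

/-- Length of the initial run of `U` steps. -/
def leadU : List Step → ℕ
  | Step.U :: rest => leadU rest + 1
  | _ => 0

/-- Length of the initial run of `H` steps. -/
def leadH : List Step → ℕ
  | Step.H :: rest => leadH rest + 1
  | _ => 0

/-- Length of the initial run of `D` steps. -/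
def leadD : List Step → ℕ
  | Step.D :: rest => leadD rest + 1
  | _ => 0

/-- Length of the first maximal run of `D` steps (0 if none). -/
def firstDescLen : List Step → ℕ
  | [] => 0
  | Step.D :: rest => leadD rest + 1
  | _ :: rest => firstDescLen rest

/-- Number of occurrences of the two-letter factor `a b`. -/
def cnt2 (a b : Step) : List Step → ℕ
  | x :: y :: rest => (if x = a ∧ y = b then 1 else 0) + cnt2 a b (y :: rest)
  | _ => 0

/-- Heights of the columns (`H` steps), starting from a given height. -/
def colHeights : ℤ → List Step → List ℤ
  | _, [] => []
  | h, Step.U :: rest => colHeights (h + 1) rest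
  | h, Step.H :: rest => h :: colHeights h rest
  | h, Step.D :: rest => colHeights (h - 1) rest

/-- Width of the leftmost maximal horizontal segment (0 if none). -/
def lhsW : List Step → ℕ
  | [] => 0
  | Step.H :: rest => leadH rest + 1
  | _ :: rest => lhsW rest

/-- Delete `h` steps at the start of the leftmost horizontal segment. -/
def stripLeadH (h : ℕ) : List Step → List Step
  | [] => []
  | Step.H :: rest => List.drop h (Step.H :: rest)
  | s :: rest => s :: stripLeadH h rest

/-- Number of initial columns of height 1: largest `j` such that the word begins `U H^j`. -/
def iuc : List Step → ℕ
  | Step.U :: rest => leadH rest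
  | _ => 0

/-- Number of maximal horizontal segments. -/
def hsCount : List Step → ℕ
  | [] => 0
  | [Step.H] => 1
  | [_] => 0
  | a :: b :: rest => (if a = Step.H ∧ b ≠ Step.H then 1 else 0) + hsCount (b :: rest)

/-- Mirror image: reverse the word and swap `U` with `D`. -/
def mir (w : List Step) : List Step := (w.reverse).map Step.mirror

/-- Shape of strictly alternating bargraphs:
`U^{i₁} H D^{k₁} H U^{i₂} H D^{k₂} H ⋯ U^{iₘ} H D^{kₘ}` with all `iᵣ, kᵣ ≥ 1`. -/
inductive SAShape : List Step → Prop where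
  | base (i k : ℕ) : 1 ≤ i → 1 ≤ k →
      SAShape (List.replicate i Step.U ++ [Step.H] ++ List.replicate k Step.D)
  | cons (i k : ℕ) (w : List Step) : 1 ≤ i → 1 ≤ k → SAShape w →
      SAShape (List.replicate i Step.U ++ [Step.H] ++ List.replicate k Step.D ++ [Step.H] ++ w)

/-- A strictly alternating bargraph. -/
def IsStrictAlt (w : List Step) : Prop := IsBargraph w ∧ SAShape w

/-- A secondary structure on `{0, …, m-1}`: all consecutive edges are present, every
vertex has at most one non-consecutive neighbour, and there are no crossing edges. -/
def IsSecondaryStructure {m : ℕ} (G : SimpleGraph (Fin m)) : Prop :=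
  (∀ i j : Fin m, (i : ℕ) + 1 = (j : ℕ) → G.Adj i j) ∧
  (∀ i j k : Fin m, G.Adj i j → G.Adj i k →
      (i : ℕ) + 1 ≠ (j : ℕ) → (j : ℕ) + 1 ≠ (i : ℕ) →
      (i : ℕ) + 1 ≠ (k : ℕ) → (k : ℕ) + 1 ≠ (i : ℕ) → j = k) ∧
  ¬ ∃ i j k l : Fin m, (i : ℕ) < (j : ℕ) ∧ (j : ℕ) < (k : ℕ) ∧ (k : ℕ) < (l : ℕ) ∧
      G.Adj i k ∧ G.Adj j l

/-- Generating function of bargraphs: `x` (variable 0) marks `H` steps,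
`y` (variable 1) marks `U` steps. -/
noncomputable def BG : MvPowerSeries (Fin 2) ℚ :=
  fun d => (Nat.card {w : List Step //
    IsBargraph w ∧ w.count Step.H = d 0 ∧ w.count Step.U = d 1} : ℚ)

/-- Generating function of cornerless Motzkin paths. -/
noncomputable def MG : MvPowerSeries (Fin 2) ℚ :=
  fun d => (Nat.card {w : List Step //
    IsMotzkin w ∧ Cornerless w ∧ w.count Step.H = d 0 ∧ w.count Step.U = d 1} : ℚ)

/-- Generating function of bargraphs avoiding the factor `DH`. -/
noncomputable def BDH : MvPowerSeries (Fin 2) ℚ :=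
  fun d => (Nat.card {w : List Step //
    IsBargraph w ∧ ¬ [Step.D, Step.H] <:+: w ∧
      w.count Step.H = d 0 ∧ w.count Step.U = d 1} : ℚ)

/-- Generating function of bargraphs avoiding the factors `DH` and `HH`. -/
noncomputable def BDHHH : MvPowerSeries (Fin 2) ℚ :=
  fun d => (Nat.card {w : List Step //
    IsBargraph w ∧ ¬ [Step.D, Step.H] <:+: w ∧ ¬ [Step.H, Step.H] <:+: w ∧
      w.count Step.H = d 0 ∧ w.count Step.U = d 1} : ℚ)

/-- Generating function of cornerless Motzkin path prefixes ending at height `h`. -/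
noncomputable def Pgf (h : ℕ) : MvPowerSeries (Fin 2) ℚ :=
  fun d => (Nat.card {w : List Step //
    IsMotzkinPrefix w ∧ Cornerless w ∧ hgt w = (h : ℤ) ∧
      w.count Step.H = d 0 ∧ w.count Step.U = d 1} : ℚ)

/-- Decomposition `G = U^a G₁ H G₂ D^a` of a strictly alternating bargraph. -/
def SADecomp (t : ℕ × List Step × List Step) (G : List Step) : Prop :=
  1 ≤ t.1 ∧ IsStrictAlt t.2.1 ∧ IsStrictAlt (Step.U :: (t.2.2 ++ [Step.D])) ∧
    G = List.replicate t.1 Step.U ++ t.2.1 ++ [Step.H] ++ t.2.2 ++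
      List.replicate t.1 Step.D

/-!
Cut a bargraph at its first descent: `w = P D^k S`, where `P` contains no `D` and, as `w` has no
factor `UD`, ends in `H`. Whether such a word is a bargraph depends on `P` only through its first
letter and the height `hgt P - k` at the bottom of the descent. So if `P` ends in `HH`, deleting
one of these `H` gives a bargraph with the same first descent and semiperimeter one less; if `P`
ends in `UH`, replacing `U H D^k` by `H D^(k-1)` gives one whose first descent is one shorter.
Both moves are invertible (insert an `H`, resp. replace `H D^j` by `U H D^(j+1)`).
-/

instance : Fintype Step := ⟨{Step.U, Step.H, Step.D}, fun x => by cases x <;> simp⟩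

open List

theorem List.prefix_append_iff {α : Type*} {p u v : List α} :
    p <+: u ++ v ↔ p <+: u ∨ ∃ q, q <+: v ∧ p = u ++ q := by
  constructor
  · intro h
    rcases prefix_or_prefix_of_prefix h (prefix_append u v) with h' | ⟨q, rfl⟩
    · exact .inl h'
    · exact .inr ⟨q, (prefix_append_right_inj u).mp h, rfl⟩
  · rintro (h | ⟨q, hq, rfl⟩)
    · exact h.trans (prefix_append u v)
    · exact (prefix_append_right_inj u).mpr hq

@[simp] lemma hgt_nil : hgt [] = 0 := rfl

@[simp] lemma hgt_cons (x : Step) (l : List Step) : hgt (x :: l) = x.val + hgt l := by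
  simp [hgt]

@[simp] lemma hgt_append (l l' : List Step) : hgt (l ++ l') = hgt l + hgt l' := by
  simp [hgt]

@[simp] lemma hgt_replicate_D (k : ℕ) : hgt (replicate k Step.D) = -k := by
  simp [hgt, Step.val]

lemma hgt_eq_count_sub_count (w : List Step) : hgt w = w.count Step.U - w.count Step.D := by
  induction w with
  | nil => simp
  | cons x w ih => cases x <;> simp [ih, Step.val] <;> ring

lemma hgt_nonneg_of_D_not_mem {l : List Step} (hl : Step.D ∉ l) : 0 ≤ hgt l :=
  sum_nonneg fun v hv => by
    obtain ⟨x, hx, rfl⟩ := mem_map.mp hv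
    cases x <;> simp_all [Step.val]

@[simp] lemma semi_append (l l' : List Step) : semi (l ++ l') = semi l + semi l' := by
  simp only [semi, count_append]
  omega

@[simp] lemma semi_cons_U (l : List Step) : semi (Step.U :: l) = semi l + 1 := by
  simp [semi]
  omega

@[simp] lemma semi_cons_H (l : List Step) : semi (Step.H :: l) = semi l + 1 := by
  simp [semi]
  omega

@[simp] lemma semi_cons_D (l : List Step) : semi (Step.D :: l) = semi l := by
  simp [semi]

@[simp] lemma semi_replicate_D (k : ℕ) : semi (replicate k Step.D) = 0 := by
  simp [semi, count_replicate]

lemma length_eq_count_add_count_add_count (w : List Step) :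
    w.length = w.count Step.U + w.count Step.H + w.count Step.D := by
  induction w with
  | nil => simp
  | cons x w ih => cases x <;> simp [ih] <;> omega

lemma IsBargraph.length_le {w : List Step} (hw : IsBargraph w) : w.length ≤ 2 * semi w := by
  have hw0 := hw.2.1
  rw [hgt_eq_count_sub_count] at hw0
  rw [length_eq_count_add_count_add_count, semi]
  omega

lemma IsBargraph.head?_eq {w : List Step} (hw : IsBargraph w) : w.head? = some Step.U := by
  obtain ⟨hlen, -, hpos, -⟩ := hw
  obtain ⟨x, y, t, rfl⟩ : ∃ x y t, w = x :: y :: t := by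
    match w, hlen with
    | x :: y :: t, _ => exact ⟨x, y, t, rfl⟩
  have := hpos [x] ⟨y :: t, rfl⟩ (by simp) (by simp)
  cases x <;> simp_all [Step.val]

def NoCorner (x y : Step) : Prop := ¬(x = Step.U ∧ y = Step.D) ∧ ¬(x = Step.D ∧ y = Step.U)

lemma List.not_pair_infix_iff {α : Type*} {a b : α} {w : List α} :
    ¬ [a, b] <:+: w ↔ ∀ l₁ l₂ : List α, w ≠ l₁ ++ a :: b :: l₂ := by
  simp [IsInfix, eq_comm]

lemma cornerless_iff_isChain {w : List Step} : Cornerless w ↔ IsChain NoCorner w := by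
  simp only [Cornerless, not_pair_infix_iff, isChain_iff_forall_rel_of_append_cons_cons, NoCorner]
  grind

lemma cornerless_append_replicate_D {P S : List Step} {k : ℕ} (hP : Step.D ∉ P)
    (hH : P.getLast? = some Step.H) (hk : k ≠ 0) :
    Cornerless (P ++ replicate k Step.D ++ S) ↔ Cornerless (Step.D :: S) := by
  obtain ⟨j, rfl⟩ := Nat.exists_eq_succ_of_ne_zero hk
  have hPchain : IsChain NoCorner P := (pairwise_of_forall_mem_list fun x hx y hy =>
    ⟨fun h => hP (h.2 ▸ hy), fun h => hP (h.1 ▸ hx)⟩).isChain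
  have hDD : NoCorner Step.D Step.D := by simp [NoCorner]
  rw [replicate_succ', append_assoc, append_assoc, singleton_append, cornerless_iff_isChain,
    cornerless_iff_isChain, isChain_append, isChain_append]
  simp [hPchain, hH, isChain_replicate_of_rel _ hDD, getLast?_replicate, NoCorner]

lemma hgt_pos_of_prefix {P p : List Step} (hP : Step.D ∉ P) (hU : P.head? = some Step.U)
    (hp : p <+: P) (hne : p ≠ []) : 0 < hgt p := by
  obtain ⟨x, p', rfl⟩ := exists_cons_of_ne_nil hne
  obtain ⟨t, rfl⟩ := hp
  obtain rfl : x = Step.U := by simpa using hU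
  have : 0 ≤ hgt p' := hgt_nonneg_of_D_not_mem fun h => hP (by simp [h])
  simp only [hgt_cons, Step.val]
  omega

lemma interior_pos_append_replicate_D_iff {P S : List Step} {k : ℕ} (hP : Step.D ∉ P)
    (hPne : P ≠ []) (hk : k ≠ 0) (hS : hgt P - k + hgt S = 0) :
    (∀ p, p <+: P ++ replicate k Step.D ++ S → p ≠ [] → p ≠ P ++ replicate k Step.D ++ S →
        0 < hgt p) ↔
      P.head? = some Step.U ∧ ∀ q, q <+: S → q ≠ S → 0 < hgt P - k + hgt q := by
  constructor
  · intro h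
    refine ⟨?_, fun q hq hne => ?_⟩
    · obtain ⟨x, P', rfl⟩ := exists_cons_of_ne_nil hPne
      have hx := h [x] ⟨P' ++ replicate k Step.D ++ S, rfl⟩ (by simp) (by simp [hk])
      cases x <;> simp_all [Step.val]
    · have := h (P ++ replicate k Step.D ++ q) (by simpa using hq) (by simp [hPne])
        (by simpa using hne)
      simp only [hgt_append, hgt_replicate_D] at this
      omega
  · rintro ⟨hU, hq⟩ p hp hne hpw
    rw [append_assoc, prefix_append_iff] at hp
    rcases hp with hp | ⟨r, hr, rfl⟩
    · exact hgt_pos_of_prefix hP hU hp hne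
    rcases prefix_append_iff.mp hr with hr | ⟨q, hq', rfl⟩
    · obtain ⟨hj, hr⟩ := prefix_replicate_iff.mp hr
      rw [hr] at hpw ⊢
      simp only [hgt_append, hgt_replicate_D]
      rcases eq_or_ne S [] with rfl | hSne
      · have : r.length ≠ k := by rintro h; simp [h] at hpw
        simp only [hgt_nil] at hS
        omega
      · have := hq [] nil_prefix hSne.symm
        simp only [hgt_nil] at this
        omega
    · have := hq q hq' (by rintro rfl; simp at hpw)
      simp only [hgt_append, hgt_replicate_D]
      omega

theorem isBargraph_append_replicate_D_iff {P S : List Step} {k : ℕ} (hP : Step.D ∉ P)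
    (hH : P.getLast? = some Step.H) (hk : k ≠ 0) :
    IsBargraph (P ++ replicate k Step.D ++ S) ↔
      P.head? = some Step.U ∧ hgt P - k + hgt S = 0 ∧
        (∀ q, q <+: S → q ≠ S → 0 < hgt P - k + hgt q) ∧ Cornerless (Step.D :: S) := by
  have hPne : P ≠ [] := by rintro rfl; simp at hH
  have hlen : 2 ≤ (P ++ replicate k Step.D ++ S).length := by
    have := length_pos_of_ne_nil hPne
    simp only [length_append, length_replicate]
    omega
  have hhgt : hgt (P ++ replicate k Step.D ++ S) = hgt P - k + hgt S := by
    simp only [hgt_append, hgt_replicate_D]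
    ring
  unfold IsBargraph
  rw [cornerless_append_replicate_D hP hH hk, hhgt]
  constructor
  · rintro ⟨-, hS, hpos, hc⟩
    obtain ⟨hU, hq⟩ := (interior_pos_append_replicate_D_iff hP hPne hk hS).mp hpos
    exact ⟨hU, hS, hq, hc⟩
  · rintro ⟨hU, hS, hq, hc⟩
    exact ⟨hlen, hS, (interior_pos_append_replicate_D_iff hP hPne hk hS).mpr ⟨hU, hq⟩, hc⟩

lemma isBargraph_congr {P P' S : List Step} {k k' : ℕ} (hP : Step.D ∉ P) (hP' : Step.D ∉ P')
    (hH : P.getLast? = some Step.H) (hH' : P'.getLast? = some Step.H) (hk : k ≠ 0)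
    (hk' : k' ≠ 0) (hhead : P.head? = P'.head?) (hhgt : hgt P - k = hgt P' - k') :
    IsBargraph (P ++ replicate k Step.D ++ S) ↔ IsBargraph (P' ++ replicate k' Step.D ++ S) := by
  rw [isBargraph_append_replicate_D_iff hP hH hk, isBargraph_append_replicate_D_iff hP' hH' hk',
    hhead, hhgt]

lemma le_hgt_of_isBargraph {P S : List Step} {k : ℕ} (hP : Step.D ∉ P)
    (hH : P.getLast? = some Step.H) (hk : k ≠ 0)
    (hw : IsBargraph (P ++ replicate k Step.D ++ S)) : (k : ℤ) ≤ hgt P := by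
  obtain ⟨-, hS, hq, -⟩ := (isBargraph_append_replicate_D_iff hP hH hk).mp hw
  rcases eq_or_ne S [] with rfl | hSne
  · simp only [hgt_nil] at hS
    omega
  · have := hq [] nil_prefix hSne.symm
    simp only [hgt_nil] at this
    omega

lemma isBargraph_insert_H_iff {C S : List Step} {k : ℕ} (hC : Step.D ∉ C) (hk : k ≠ 0) :
    IsBargraph (C ++ [Step.H, Step.H] ++ replicate k Step.D ++ S) ↔
      IsBargraph (C ++ [Step.H] ++ replicate k Step.D ++ S) :=
  isBargraph_congr (by simp [hC]) (by simp [hC]) (by simp) (by simp) hk hk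
    (by cases C <;> simp) (by simp [Step.val])

lemma isBargraph_raise_iff {C S : List Step} {k : ℕ} (hC : Step.D ∉ C) (hCne : C ≠ [])
    (hk : k ≠ 0) :
    IsBargraph (C ++ [Step.U, Step.H] ++ replicate (k + 1) Step.D ++ S) ↔
      IsBargraph (C ++ [Step.H] ++ replicate k Step.D ++ S) :=
  isBargraph_congr (by simp [hC]) (by simp [hC]) (by simp) (by simp) (by omega) hk
    (by cases C <;> simp_all) (by simp [Step.val])

lemma firstDescLen_append_of_D_not_mem {P : List Step} (hP : Step.D ∉ P) (l : List Step) :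
    firstDescLen (P ++ l) = firstDescLen l := by
  induction P with
  | nil => rfl
  | cons x P ih =>
    rw [mem_cons, not_or] at hP
    cases x
    · exact ih hP.2
    · exact ih hP.2
    · exact absurd rfl hP.1

lemma leadD_replicate_D_append (k : ℕ) {S : List Step} (hS : S.head? ≠ some Step.D) :
    leadD (replicate k Step.D ++ S) = k := by
  induction k with
  | zero =>
    rcases S with _ | ⟨_ | _ | _, _⟩ <;> simp_all [leadD]
  | succ k ih => simp [replicate_succ, leadD, ih]

lemma firstDescLen_append_replicate_D {P S : List Step} {k : ℕ} (hP : Step.D ∉ P) (hk : k ≠ 0)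
    (hS : S.head? ≠ some Step.D) : firstDescLen (P ++ replicate k Step.D ++ S) = k := by
  obtain ⟨j, rfl⟩ := Nat.exists_eq_succ_of_ne_zero hk
  rw [append_assoc, firstDescLen_append_of_D_not_mem hP, replicate_succ, cons_append,
    firstDescLen, leadD_replicate_D_append j hS]

lemma exists_eq_replicate_D_append (l : List Step) :
    ∃ j S, S.head? ≠ some Step.D ∧ l = replicate j Step.D ++ S := by
  induction l with
  | nil => exact ⟨0, [], by simp, rfl⟩
  | cons x l ih =>
    cases x
    · exact ⟨0, _, by simp, rfl⟩
    · exact ⟨0, _, by simp, rfl⟩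
    · obtain ⟨j, S, hS, rfl⟩ := ih
      exact ⟨j + 1, S, hS, rfl⟩

lemma exists_eq_append_replicate_D {w : List Step} (hw : Step.D ∈ w) :
    ∃ P k S, Step.D ∉ P ∧ k ≠ 0 ∧ S.head? ≠ some Step.D ∧ w = P ++ replicate k Step.D ++ S := by
  induction w with
  | nil => simp at hw
  | cons x w ih =>
    by_cases hx : x = Step.D
    · subst hx
      obtain ⟨j, S, hS, rfl⟩ := exists_eq_replicate_D_append w
      exact ⟨[], j + 1, S, by simp, by simp, hS, rfl⟩
    · obtain ⟨P, k, S, hP, hk, hS, rfl⟩ := ih (by simpa [Ne.symm hx] using hw)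
      exact ⟨x :: P, k, S, by simp [Ne.symm hx, hP], hk, hS, rfl⟩

lemma IsBargraph.D_mem {w : List Step} (hw : IsBargraph w) : Step.D ∈ w := by
  by_contra hD
  obtain ⟨r, rfl⟩ : ∃ r, w = Step.U :: r := by
    have := hw.head?_eq
    rcases w with _ | ⟨x, r⟩ <;> simp_all
  have hr : 0 ≤ hgt r := hgt_nonneg_of_D_not_mem fun h => hD (mem_cons_of_mem _ h)
  have hw0 : hgt (Step.U :: r) = 0 := hw.2.1
  simp only [hgt_cons, Step.val] at hw0
  omega

lemma IsBargraph.exists_split {w : List Step} (hw : IsBargraph w) :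
    ∃ C k S, Step.D ∉ C ∧ C ≠ [] ∧ k ≠ 0 ∧ S.head? ≠ some Step.D ∧
      w = C ++ [Step.H] ++ replicate k Step.D ++ S := by
  have hUD : ¬ [Step.U, Step.D] <:+: w := hw.2.2.2.1
  obtain ⟨P, k, S, hP, hk, hS, rfl⟩ := exists_eq_append_replicate_D hw.D_mem
  obtain ⟨j, rfl⟩ := Nat.exists_eq_succ_of_ne_zero hk
  rcases eq_nil_or_concat P with rfl | ⟨C, x, rfl⟩
  · simpa [replicate_succ] using hw.head?_eq
  obtain rfl : x = Step.H := by
    cases x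
    · exact absurd ⟨C, replicate j Step.D ++ S, by simp [replicate_succ]⟩ hUD
    · rfl
    · simp at hP
  refine ⟨C, j + 1, S, fun h => hP (by simp [h]), ?_, hk, hS, by simp⟩
  rintro rfl
  simpa using hw.head?_eq

lemma IsBargraph.exists_split_last {w : List Step} (hw : IsBargraph w) :
    ∃ C x k S, Step.D ∉ C ∧ x ≠ Step.D ∧ k ≠ 0 ∧ S.head? ≠ some Step.D ∧
      w = C ++ [x, Step.H] ++ replicate k Step.D ++ S := by
  obtain ⟨C, k, S, hC, hCne, hk, hS, rfl⟩ := hw.exists_split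
  obtain ⟨C, x, rfl⟩ := (eq_nil_or_concat C).resolve_left hCne
  exact ⟨C, x, k, S, fun h => hC (by simp [h]), fun h => hC (by simp [h]), hk, hS, by simp⟩

section Columns

def untilDesc (w : List Step) : List Step := w.takeWhile (· != Step.D)

def fromDesc (w : List Step) : List Step := w.dropWhile (· != Step.D)

lemma untilDesc_append_replicate_D {P S : List Step} {k : ℕ} (hP : Step.D ∉ P) (hk : k ≠ 0) :
    untilDesc (P ++ replicate k Step.D ++ S) = P := by
  obtain ⟨j, rfl⟩ := Nat.exists_eq_succ_of_ne_zero hk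
  have : ∀ a ∈ P, (a != Step.D) = true := fun a ha => by simpa using ne_of_mem_of_not_mem ha hP
  simp [untilDesc, takeWhile_append_of_pos this, replicate_succ]

lemma fromDesc_append_replicate_D {P S : List Step} {k : ℕ} (hP : Step.D ∉ P) (hk : k ≠ 0) :
    fromDesc (P ++ replicate k Step.D ++ S) = replicate k Step.D ++ S := by
  obtain ⟨j, rfl⟩ := Nat.exists_eq_succ_of_ne_zero hk
  have : ∀ a ∈ P, (a != Step.D) = true := fun a ha => by simpa using ne_of_mem_of_not_mem ha hP
  simp [fromDesc, dropWhile_append_of_pos this, replicate_succ]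

-- The column just left of the first descent is duplicated, deleted, or raised or lowered by one
-- (which lengthens or shortens the first descent).
def insertColumn (w : List Step) : List Step := untilDesc w ++ Step.H :: fromDesc w

def eraseColumn (w : List Step) : List Step := (untilDesc w).dropLast ++ fromDesc w

def raiseColumn (w : List Step) : List Step :=
  (untilDesc w).dropLast ++ Step.U :: Step.H :: Step.D :: fromDesc w

def lowerColumn (w : List Step) : List Step :=
  (untilDesc w).dropLast.dropLast ++ Step.H :: (fromDesc w).tail

variable {C S : List Step} {k : ℕ}

lemma insertColumn_split (hC : Step.D ∉ C) (hk : k ≠ 0) :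
    insertColumn (C ++ [Step.H] ++ replicate k Step.D ++ S) =
      C ++ [Step.H, Step.H] ++ replicate k Step.D ++ S := by
  rw [insertColumn, untilDesc_append_replicate_D (by simp [hC]) hk,
    fromDesc_append_replicate_D (by simp [hC]) hk]
  simp

lemma eraseColumn_split (hC : Step.D ∉ C) (hk : k ≠ 0) :
    eraseColumn (C ++ [Step.H, Step.H] ++ replicate k Step.D ++ S) =
      C ++ [Step.H] ++ replicate k Step.D ++ S := by
  rw [eraseColumn, untilDesc_append_replicate_D (by simp [hC]) hk,
    fromDesc_append_replicate_D (by simp [hC]) hk]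
  simp

lemma raiseColumn_split (hC : Step.D ∉ C) (hk : k ≠ 0) :
    raiseColumn (C ++ [Step.H] ++ replicate k Step.D ++ S) =
      C ++ [Step.U, Step.H] ++ replicate (k + 1) Step.D ++ S := by
  rw [raiseColumn, untilDesc_append_replicate_D (by simp [hC]) hk,
    fromDesc_append_replicate_D (by simp [hC]) hk]
  simp [replicate_succ]

lemma lowerColumn_split (hC : Step.D ∉ C) :
    lowerColumn (C ++ [Step.U, Step.H] ++ replicate (k + 1) Step.D ++ S) =
      C ++ [Step.H] ++ replicate k Step.D ++ S := by
  rw [lowerColumn, untilDesc_append_replicate_D (by simp [hC]) (by omega),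
    fromDesc_append_replicate_D (by simp [hC]) (by omega)]
  simp [replicate_succ]

lemma suffix_HH_untilDesc_split_iff (hC : Step.D ∉ C) (hk : k ≠ 0) {x : Step} (hx : x ≠ Step.D) :
    [Step.H, Step.H] <:+ untilDesc (C ++ [x, Step.H] ++ replicate k Step.D ++ S) ↔
      x = Step.H := by
  rw [untilDesc_append_replicate_D (by simp [hC, Ne.symm hx]) hk,
    show C ++ [x, Step.H] = C ++ [x] ++ [Step.H] by simp,
    show [Step.H, Step.H] = [Step.H] ++ [Step.H] from rfl, suffix_append_self_iff,
    singleton_suffix_append_singleton_iff, eq_comm]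

end Columns

section Counting

def bargraphSet (n k : ℕ) : Set (List Step) :=
  {w | IsBargraph w ∧ semi w = n ∧ firstDescLen w = k}

instance (n k : ℕ) : Finite (bargraphSet n k) := by
  refine Set.Finite.to_subtype ((List.finite_length_le Step (2 * n)).subset ?_)
  rintro w ⟨hw, rfl, -⟩
  exact hw.length_le

variable {n k : ℕ} {w : List Step}

lemma eraseColumn_mem (hw : w ∈ bargraphSet (n + 1) k)
    (hHH : [Step.H, Step.H] <:+ untilDesc w) :
    eraseColumn w ∈ bargraphSet n k ∧ insertColumn (eraseColumn w) = w := by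
  obtain ⟨hb, hsemi, rfl⟩ := hw
  obtain ⟨C, x, j, S, hC, hx, hj, hS, rfl⟩ := hb.exists_split_last
  obtain rfl := (suffix_HH_untilDesc_split_iff hC hj hx).mp hHH
  rw [eraseColumn_split hC hj, insertColumn_split hC hj,
    firstDescLen_append_replicate_D (by simp [hC]) hj hS]
  refine ⟨⟨(isBargraph_insert_H_iff hC hj).mp hb, ?_,
    firstDescLen_append_replicate_D (by simp [hC]) hj hS⟩, rfl⟩
  simp at hsemi ⊢
  omega

lemma lowerColumn_mem (hw : w ∈ bargraphSet (n + 1) (k + 1)) (hk : k ≠ 0)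
    (hHH : ¬ [Step.H, Step.H] <:+ untilDesc w) :
    lowerColumn w ∈ bargraphSet n k ∧ raiseColumn (lowerColumn w) = w := by
  obtain ⟨hb, hsemi, hfd⟩ := hw
  obtain ⟨C, x, j, S, hC, hx, hj, hS, rfl⟩ := hb.exists_split_last
  rw [suffix_HH_untilDesc_split_iff hC hj hx] at hHH
  obtain rfl : x = Step.U := by cases x <;> simp_all
  obtain rfl : j = k + 1 := by rwa [firstDescLen_append_replicate_D (by simp [hC]) hj hS] at hfd
  have hCne : C ≠ [] := by
    rintro rfl
    have := le_hgt_of_isBargraph (by simp) (by simp) hj hb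
    simp [Step.val] at this
    omega
  rw [lowerColumn_split hC, raiseColumn_split hC hk]
  refine ⟨⟨(isBargraph_raise_iff hC hCne hk).mp hb, ?_,
    firstDescLen_append_replicate_D (by simp [hC]) hk hS⟩, rfl⟩
  simp at hsemi ⊢
  omega

lemma insertColumn_mem (hw : w ∈ bargraphSet n k) :
    insertColumn w ∈ bargraphSet (n + 1) k ∧ [Step.H, Step.H] <:+ untilDesc (insertColumn w) ∧
      eraseColumn (insertColumn w) = w := by
  obtain ⟨hb, rfl, rfl⟩ := hw
  obtain ⟨C, j, S, hC, -, hj, hS, rfl⟩ := hb.exists_split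
  rw [insertColumn_split hC hj, eraseColumn_split hC hj,
    suffix_HH_untilDesc_split_iff hC hj (by simp),
    firstDescLen_append_replicate_D (by simp [hC]) hj hS]
  exact ⟨⟨(isBargraph_insert_H_iff hC hj).mpr hb, by simp; omega,
    firstDescLen_append_replicate_D (by simp [hC]) hj hS⟩, rfl, rfl⟩

lemma raiseColumn_mem (hw : w ∈ bargraphSet n k) :
    raiseColumn w ∈ bargraphSet (n + 1) (k + 1) ∧
      ¬ [Step.H, Step.H] <:+ untilDesc (raiseColumn w) ∧ lowerColumn (raiseColumn w) = w := by
  obtain ⟨hb, rfl, rfl⟩ := hw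
  obtain ⟨C, j, S, hC, hCne, hj, hS, rfl⟩ := hb.exists_split
  rw [raiseColumn_split hC hj, lowerColumn_split hC,
    suffix_HH_untilDesc_split_iff hC (by omega) (by simp),
    firstDescLen_append_replicate_D (by simp [hC]) hj hS]
  exact ⟨⟨(isBargraph_raise_iff hC hCne hj).mpr hb, by simp; omega,
    firstDescLen_append_replicate_D (by simp [hC]) (by omega) hS⟩, by simp, rfl⟩

def bargraphSetEquiv (hk : k ≠ 0) :
    bargraphSet (n + 1) (k + 1) ≃ bargraphSet n (k + 1) ⊕ bargraphSet n k where
  toFun w :=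
    if hHH : [Step.H, Step.H] <:+ untilDesc w then .inl ⟨_, (eraseColumn_mem w.2 hHH).1⟩
    else .inr ⟨_, (lowerColumn_mem w.2 hk hHH).1⟩
  invFun := Sum.elim (fun v => ⟨_, (insertColumn_mem v.2).1⟩) (fun v => ⟨_, (raiseColumn_mem v.2).1⟩)
  left_inv w := by
    by_cases hHH : [Step.H, Step.H] <:+ untilDesc w
    · simp [hHH, (eraseColumn_mem w.2 hHH).2]
    · simp [hHH, (lowerColumn_mem w.2 hk hHH).2]
  right_inv := by
    rintro (v | v)
    · simp [(insertColumn_mem v.2).2]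
    · simp [(raiseColumn_mem v.2).2]

end Counting

/-- the number `a_{n,k}` of bargraphs of semiperimeter `n` whose first
descent has length `k` satisfies `a_{n,k} = a_{n-1,k} + a_{n-1,k-1}` for `n, k ≥ 2`. -/
theorem firstDescent_recurrence :
    ∀ n k : ℕ, 2 ≤ n → 2 ≤ k →
      Nat.card {w : List Step // IsBargraph w ∧ semi w = n ∧ firstDescLen w = k}
        = Nat.card {w : List Step //
            IsBargraph w ∧ semi w = n - 1 ∧ firstDescLen w = k}
          + Nat.card {w : List Step //
              IsBargraph w ∧ semi w = n - 1 ∧ firstDescLen w = k - 1} := by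
  intro n k hn hk
  obtain ⟨n, rfl⟩ : ∃ m, n = m + 1 := ⟨n - 1, by omega⟩
  obtain ⟨k, rfl⟩ : ∃ j, k = j + 1 := ⟨k - 1, by omega⟩
  exact (Nat.card_congr (bargraphSetEquiv (by omega))).trans Nat.card_sum
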